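/- arXiv:2110.15411 — 2 statements merged into one kernel-verified Lean document; each statement's English description precedes it below -/
import Mathlib

section
/- Let X be a topological space and (f_i)_{i<ω} a sequence of continuous functions from X to {0,1} such that there is N with Σ_{i} |f_i(b) − f_{i+1}(b)| ≤ N for all b ∈ X. Then the pointwise limit f of (f_i) exists and can be written as a difference F_1 − F_2 of two bounded lower semicontinuous functions on X. -/
open Filter Topology

/-!
Split each increment `f (i+1) b - f i b` into its positive and negative parts. Then
`f n b = f 0 b + P n b - M n b`, where `P n` and `M n`, the upward and downward variation up to
time `n`, are continuous, nondecreasing in `n` and bounded by `N`. Hence `f n b` converges to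
`f 0 b + sup P - sup M`, and a pointwise supremum of continuous functions is lower
semicontinuous.
-/

/-- The downward variation of `u` is taken to be `upVariation (-u)`. -/
noncomputable def upVariation (u : ℕ → ℝ) (n : ℕ) : ℝ :=
  ∑ i ∈ Finset.range n, (u (i + 1) - u i)⁺

section Sequence

variable (u : ℕ → ℝ)

lemma upVariation_nonneg (n : ℕ) : 0 ≤ upVariation u n :=
  Finset.sum_nonneg fun _ _ => posPart_nonneg _

lemma monotone_upVariation : Monotone (upVariation u) :=
  monotone_nat_of_le_succ fun n => by
    simp only [upVariation, Finset.sum_range_succ]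
    exact le_add_of_nonneg_right (posPart_nonneg _)

lemma upVariation_le_sum_abs (n : ℕ) :
    upVariation u n ≤ ∑ i ∈ Finset.range n, |u i - u (i + 1)| :=
  Finset.sum_le_sum fun i _ => abs_sub_comm (u i) _ ▸ sup_le (le_abs_self _) (abs_nonneg _)

lemma sum_abs_sub_neg (n : ℕ) :
    ∑ i ∈ Finset.range n, |(-u) i - (-u) (i + 1)| = ∑ i ∈ Finset.range n, |u i - u (i + 1)| := by
  simp only [Pi.neg_apply, neg_sub_neg, abs_sub_comm]

lemma upVariation_sub_upVariation_neg (n : ℕ) :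
    upVariation u n - upVariation (-u) n = u n - u 0 := by
  have hneg : ∀ i, ((-u) (i + 1) - (-u) i)⁺ = (u (i + 1) - u i)⁻ := fun i => by
    rw [Pi.neg_apply, Pi.neg_apply, neg_sub_neg, ← neg_sub, posPart_neg]
  simp only [upVariation, hneg, ← Finset.sum_sub_distrib, posPart_sub_negPart,
    Finset.sum_range_sub (f := u)]

variable {u} {C : ℝ} (hC : ∀ n, ∑ i ∈ Finset.range n, |u i - u (i + 1)| ≤ C)
include hC

lemma bddAbove_range_upVariation : BddAbove (Set.range (upVariation u)) :=
  ⟨C, Set.forall_mem_range.2 fun n => (upVariation_le_sum_abs u n).trans (hC n)⟩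

lemma abs_iSup_upVariation_le : |⨆ n, upVariation u n| ≤ C := by
  have hle : ⨆ n, upVariation u n ≤ C :=
    ciSup_le fun n => (upVariation_le_sum_abs u n).trans (hC n)
  rw [abs_of_nonneg (Real.iSup_nonneg (upVariation_nonneg u))]
  exact hle

lemma tendsto_of_sum_abs_sub_le :
    Tendsto u atTop (𝓝 (u 0 + (⨆ n, upVariation u n) - ⨆ n, upVariation (-u) n)) := by
  have hC' : ∀ n, ∑ i ∈ Finset.range n, |(-u) i - (-u) (i + 1)| ≤ C := fun n =>
    (sum_abs_sub_neg u n).trans_le (hC n)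
  have hup := tendsto_atTop_ciSup (monotone_upVariation u) (bddAbove_range_upVariation hC)
  have hdown := tendsto_atTop_ciSup (monotone_upVariation (-u)) (bddAbove_range_upVariation hC')
  refine ((hup.const_add (u 0)).sub hdown).congr fun n => ?_
  linarith [upVariation_sub_upVariation_neg u n]

end Sequence

lemma lowerSemicontinuous_iSup_upVariation {X : Type*} [TopologicalSpace X] {f : ℕ → X → ℝ}
    (hf : ∀ i, Continuous (f i)) {C : ℝ}
    (hC : ∀ b n, ∑ i ∈ Finset.range n, |f i b - f (i + 1) b| ≤ C) :
    LowerSemicontinuous fun b => ⨆ n, upVariation (fun i => f i b) n := by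
  refine lowerSemicontinuous_ciSup (fun b => bddAbove_range_upVariation (hC b)) fun n => ?_
  refine Continuous.lowerSemicontinuous ?_
  unfold upVariation
  fun_prop

/-- If `f i : X → {0,1}` are continuous and DBSC-convergent (uniformly bounded
total variation), then the pointwise limit exists and is a difference of two
bounded lower semicontinuous functions. -/
theorem dbsc_limit_is_DBSC {X : Type*} [TopologicalSpace X] (f : ℕ → X → ℝ)
    (hcont : ∀ i, Continuous (f i))
    (hvals : ∀ i b, f i b = 0 ∨ f i b = 1) (N : ℕ)
    (hN : ∀ b (n : ℕ), ∑ i ∈ Finset.range n, |f i b - f (i + 1) b| ≤ N) :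
    ∃ (g F₁ F₂ : X → ℝ),
      (∀ b, Tendsto (fun i => f i b) atTop (nhds (g b))) ∧
      g = F₁ - F₂ ∧
      LowerSemicontinuous F₁ ∧ LowerSemicontinuous F₂ ∧
      (∃ C : ℝ, ∀ x, |F₁ x| ≤ C) ∧ (∃ C : ℝ, ∀ x, |F₂ x| ≤ C) := by
  have hN_neg : ∀ b n, ∑ i ∈ Finset.range n, |-f i b - -f (i + 1) b| ≤ N := fun b n =>
    (sum_abs_sub_neg (fun i => f i b) n).trans_le (hN b n)
  have hf₀ : ∀ b, |f 0 b| ≤ 1 := fun b => by rcases hvals 0 b with h | h <;> simp [h]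
  refine ⟨_, fun b => f 0 b + ⨆ n, upVariation (fun i => f i b) n,
    fun b => ⨆ n, upVariation (fun i => -f i b) n,
    fun b => tendsto_of_sum_abs_sub_le (hN b), rfl, ?_, ?_, ⟨1 + N, fun b => ?_⟩, ⟨N, fun b => ?_⟩⟩
  · exact (hcont 0).lowerSemicontinuous.add (lowerSemicontinuous_iSup_upVariation hcont hN)
  · exact lowerSemicontinuous_iSup_upVariation (fun i => (hcont i).neg) hN_neg
  · exact (abs_add_le _ _).trans (add_le_add (hf₀ b) (abs_iSup_upVariation_le (hN b)))
  · exact abs_iSup_upVariation_le (hN_neg b)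
end

section
/- Let L be a first-order language, T an L-theory, M a model of T, and let (a_i)_{i<ω} be a sequence of tuples in M that is order-indiscernible over ∅. If φ(x, y) is an L-formula and there exists b (in an elementary extension) such that φ(a_i, b) holds if and only if i is even, then for every n the sentence asserting 'for every subset F of {1,...,n} there is y such that φ(x_i, y) holds exactly for i ∈ F' is satisfied by (a_1, ..., a_n). -/
/-!
Choose indices `i₁ < ⋯ < iₙ` with `iₖ` even exactly when `k ∈ F`; the parameter `b` then
realizes the pattern `F` on `a_{i₁}, …, a_{iₙ}`. Realizing a pattern is expressed by a single
formula in the sequence variables, so it passes down to `M` along the elementary embedding, over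
to `a₁, …, aₙ` by indiscernibility, and back up to `N`.
-/

open FirstOrder Language

namespace FirstOrder.Language

variable {L : Language} {M N : Type*} [L.Structure M] [L.Structure N]

variable (L) in
def IsOrderIndiscernible {α : Type*} (a : ℕ → α → M) : Prop :=
  ∀ (k : ℕ) (ψ : L.Formula (Fin k × α)) (i j : Fin k → ℕ), StrictMono i → StrictMono j →
    (ψ.Realize (fun p => a (i p.1) p.2) ↔ ψ.Realize (fun p => a (j p.1) p.2))

section Pattern

variable {ι α β : Type*} [Finite ι] [Finite β]

open Classical in
/-- `∃ y, ⋀ₖ φ(xₖ, y)^{[k ∈ F]}`, in the variables `xₖ = ((k, q))_q`. -/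
noncomputable def patternFormula (φ : L.Formula (α ⊕ β)) (F : Set ι) : L.Formula (ι × α) :=
  Formula.iExs β <| Formula.iInf fun k =>
    let φk := φ.relabel (Sum.map (k, ·) id)
    if k ∈ F then φk else φk.not

theorem realize_patternFormula {P : Type*} [L.Structure P] (φ : L.Formula (α ⊕ β)) (F : Set ι)
    (v : ι × α → P) :
    (patternFormula φ F).Realize v ↔
      ∃ c : β → P, ∀ k, (φ.Realize (Sum.elim (fun q => v (k, q)) c) ↔ k ∈ F) := by
  have relabel_eq (c : β → P) (k : ι) :
      Sum.elim v c ∘ Sum.map (k, ·) id = Sum.elim (fun q => v (k, q)) c := by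
    ext (_ | _) <;> rfl
  simp only [patternFormula, Formula.realize_iExs, Formula.realize_iInf]
  refine exists_congr fun c => forall_congr' fun k => ?_
  split_ifs with hk <;>
    simp [hk, Formula.realize_relabel, relabel_eq]

end Pattern

theorem exists_pattern_iff_of_strictMono {α β : Type*} [Finite β] {a : ℕ → α → M}
    (hind : IsOrderIndiscernible L a) (emb : M ↪ₑ[L] N) (φ : L.Formula (α ⊕ β)) {n : ℕ}
    (F : Set (Fin n)) {i j : Fin n → ℕ} (hi : StrictMono i) (hj : StrictMono j) :
    (∃ c : β → N, ∀ k, (φ.Realize (Sum.elim (fun q => emb (a (i k) q)) c) ↔ k ∈ F)) ↔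
      ∃ c : β → N, ∀ k, (φ.Realize (Sum.elim (fun q => emb (a (j k) q)) c) ↔ k ∈ F) := by
  set ψ := patternFormula φ F
  calc _ ↔ ψ.Realize (fun p => emb (a (i p.1) p.2)) := (realize_patternFormula φ F _).symm
    _ ↔ ψ.Realize (fun p => a (i p.1) p.2) := emb.map_formula ψ _
    _ ↔ ψ.Realize (fun p => a (j p.1) p.2) := hind n ψ i j hi hj
    _ ↔ ψ.Realize (fun p => emb (a (j p.1) p.2)) := (emb.map_formula ψ _).symm
    _ ↔ _ := realize_patternFormula φ F _

end FirstOrder.Language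

theorem Fin.exists_strictMono_even_iff_mem {n : ℕ} (F : Set (Fin n)) :
    ∃ f : Fin n → ℕ, StrictMono f ∧ ∀ k, (Even (f k) ↔ k ∈ F) := by
  classical
  refine ⟨fun k => 2 * k + if k ∈ F then 0 else 1, fun k k' (h : (k : ℕ) < k') => ?_,
    fun k => ?_⟩
  · dsimp only
    split_ifs <;> omega
  · dsimp only
    split_ifs with hk <;> simp [hk]

theorem alternation_yields_all_patterns_general
    {L : Language} {M N : Type*}
    [L.Structure M] [L.Structure N]
    (emb : M ↪ₑ[L] N)
    {m l : ℕ} (a : ℕ → (Fin m → M))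
    (hind : ∀ (k : ℕ) (ψ : L.Formula (Fin k × Fin m)) (i j : Fin k → ℕ),
      StrictMono i → StrictMono j →
      (ψ.Realize (fun p => a (i p.1) p.2) ↔ ψ.Realize (fun p => a (j p.1) p.2)))
    (φ : L.Formula (Fin m ⊕ Fin l)) (b : Fin l → N)
    (hb : ∀ i : ℕ,
      φ.Realize (Sum.elim (fun q => emb (a i q)) b) ↔ Even i) :
    ∀ (n : ℕ) (F : Set (Fin n)), ∃ c : Fin l → N, ∀ i : Fin n,
      (φ.Realize (Sum.elim (fun q => emb (a (i.val + 1) q)) c) ↔ i ∈ F) := by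
  intro n F
  obtain ⟨f, hf, hf_even⟩ := Fin.exists_strictMono_even_iff_mem F
  have hshift : StrictMono fun k : Fin n => k.val + 1 := fun _ _ h => Nat.succ_lt_succ h
  exact (exists_pattern_iff_of_strictMono hind emb φ F hf hshift).mp
    ⟨b, fun k => (hb (f k)).trans (hf_even k)⟩

/-- If `(a i)` is a sequence of `m`-tuples in `M ⊨ T` that is order-indiscernible
over `∅`, and in an elementary extension `N` there is a tuple `b` such that
`φ(a i, b)` holds iff `i` is even, then for every `n` and every subset `F` of
`{1, ..., n}` there is a tuple `c` in `N` such that `φ(a i, c)` holds exactly for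
`i ∈ F`. -/
theorem alternation_yields_all_patterns
    {L : Language} (T : L.Theory) {M N : Type*}
    [L.Structure M] [L.Structure N] [Nonempty M] [Nonempty N]
    [T.Model M]
    (emb : M ↪ₑ[L] N)
    {m l : ℕ} (a : ℕ → (Fin m → M))
    (hind : ∀ (k : ℕ) (ψ : L.Formula (Fin k × Fin m)) (i j : Fin k → ℕ),
      StrictMono i → StrictMono j →
      (ψ.Realize (fun p => a (i p.1) p.2) ↔ ψ.Realize (fun p => a (j p.1) p.2)))
    (φ : L.Formula (Fin m ⊕ Fin l)) (b : Fin l → N)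
    (hb : ∀ i : ℕ,
      φ.Realize (Sum.elim (fun q => emb (a i q)) b) ↔ Even i) :
    ∀ (n : ℕ) (F : Set (Fin n)), ∃ c : Fin l → N, ∀ i : Fin n,
      (φ.Realize (Sum.elim (fun q => emb (a (i.val + 1) q)) c) ↔ i ∈ F) :=
  alternation_yields_all_patterns_general emb a hind φ b hb
end
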